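/- Let k+1 ≤ s and let l ∈ I(μ,s+1)' (i.e., l ∈ I(μ,s+1) with q_l = 0). Then there exist m ∈ I(μ,s)' and r ∈ {1,...,n} such that l = m + ε_r and μ_r + |μ| − r + m_r + 1 ≠ 0, where the hypothesis is that I(μ,j)' is nonempty only for j ≥ k+1 and I(μ,k+1)' = {(k+1)ε_t} for some t. -/

import Mathlib

/-!
Write `A r = μ_r + |μ| - r` (`shiftedWeight`; indices of `Fin n` are shifted by one), so that
`q_c = ∏_r ∏_{i < c_r} (A r + i + 1)` and `q_{m + ε_r} = q_m (A r + m_r + 1)`. Minimality of `k`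
forces `A t = -(k+1)`. It suffices to find `r` with `l_r ≥ 1` and `A r + l_r ≠ 0`, and to put
`m = l - ε_r`. If there were none, every `r` in the support of `l` would have `A r = -l_r`, hence
`l_r ≥ k+1` by minimality of `k`. As `μ_a - μ_b ∈ ℕ` for `a ≤ b`, also `A a - A b - (b - a) ∈ ℕ`, so
`r` cannot lie before `t`; nor after `t`, since `l_r ≤ μ_{r-1} - μ_r` makes `A (r-1) ≥ 1 > A t`.
So `l = (k+1) ε_t`, contradicting `|l| = s+1 > k+1`.
-/

noncomputable section

variable (n : ℕ)

/-- The index set I(μ,j) of (2.11). -/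
def Iset (μ : Fin n → ℂ) (j : ℕ) : Set (Fin n → ℕ) :=
  {c | (∑ i, c i) = j ∧
    ∀ s t : Fin n, (s : ℕ) + 1 = (t : ℕ) →
      ∃ m : ℕ, μ s - μ t = (m : ℂ) ∧ c t ≤ m}

/-- The scalar q_c of Lemma 3.2.3. -/
def qc (μ : Fin n → ℂ) (c : Fin n → ℕ) : ℂ :=
  ∏ s : Fin n, ∏ i ∈ Finset.range (c s),
    (μ s + (∑ j, μ j) - ((s : ℕ) + 1) + (i + 1))

section

variable {n}

open Finset

def shiftedWeight (μ : Fin n → ℂ) (r : Fin n) : ℂ :=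
  μ r + (∑ j, μ j) - ((r : ℕ) + 1)

variable {μ : Fin n → ℂ}

lemma qc_eq_prod_shiftedWeight (c : Fin n → ℕ) :
    qc n μ c = ∏ s, ∏ i ∈ range (c s), (shiftedWeight μ s + (i + 1)) :=
  rfl

lemma qc_single (r : Fin n) (j : ℕ) :
    qc n μ (Pi.single r j) = ∏ i ∈ range j, (shiftedWeight μ r + (i + 1)) := by
  rw [qc_eq_prod_shiftedWeight, Fintype.prod_eq_single r fun s hs => by simp [hs]]
  simp

lemma qc_single_eq_zero {r : Fin n} {j : ℕ} (hj : 1 ≤ j) (h : shiftedWeight μ r + j = 0) :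
    qc n μ (Pi.single r j) = 0 := by
  obtain ⟨i, rfl⟩ := Nat.exists_eq_add_of_le' hj
  rw [qc_single, prod_range_succ, mul_eq_zero]
  exact Or.inr (by exact_mod_cast h)

lemma qc_add_single (c : Fin n → ℕ) (r : Fin n) :
    qc n μ (c + Pi.single r 1) = qc n μ c * (shiftedWeight μ r + (c r + 1)) := by
  have hfactor (s : Fin n) :
      ∏ i ∈ range ((c + Pi.single r 1 : Fin n → ℕ) s), (shiftedWeight μ s + (i + 1)) =
        (∏ i ∈ range (c s), (shiftedWeight μ s + (i + 1))) *
          (Pi.mulSingle r (shiftedWeight μ r + (c r + 1)) : Fin n → ℂ) s := by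
    rcases eq_or_ne s r with rfl | hs
    · simp [prod_range_succ]
    · simp [hs]
  rw [qc_eq_prod_shiftedWeight, Fintype.prod_congr _ _ hfactor, prod_mul_distrib,
    prod_pi_mulSingle']
  simp [qc_eq_prod_shiftedWeight]

lemma single_mem_Iset {c : Fin n → ℕ} {j j' : ℕ} (hc : c ∈ Iset n μ j') {r : Fin n}
    (hj : j ≤ c r) : Pi.single r j ∈ Iset n μ j := by
  refine ⟨by simp, fun a b hab => ?_⟩
  obtain ⟨M, hM, hcM⟩ := hc.2 a b hab
  refine ⟨M, hM, ?_⟩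
  rcases eq_or_ne b r with rfl | hb
  · simpa using hj.trans hcM
  · simp [hb]

lemma mem_Iset_of_add_single {c : Fin n → ℕ} {r : Fin n} {j : ℕ}
    (hc : c + Pi.single r 1 ∈ Iset n μ (j + 1)) : c ∈ Iset n μ j := by
  refine ⟨?_, fun a b hab => ?_⟩
  · have := hc.1
    simp only [Pi.add_apply, sum_add_distrib, sum_pi_single', mem_univ, if_true] at this
    omega
  · obtain ⟨M, hM, hcM⟩ := hc.2 a b hab
    exact ⟨M, hM, le_trans (by simp) hcM⟩

lemma exists_eq_add_single {c : Fin n → ℕ} {r : Fin n} (hr : 1 ≤ c r) :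
    ∃ m : Fin n → ℕ, c = m + Pi.single r 1 := by
  refine ⟨c - Pi.single r 1, funext fun i => ?_⟩
  rcases eq_or_ne i r with rfl | hi
  · simp only [Pi.add_apply, Pi.sub_apply, Pi.single_eq_same]
    omega
  · simp [hi]

lemma exists_sub_eq_natCast {c : Fin n → ℕ} {j : ℕ} (hc : c ∈ Iset n μ j) {a b : Fin n}
    (hab : a ≤ b) : ∃ e : ℕ, μ a - μ b = e := by
  obtain ⟨d, hd⟩ := Nat.exists_eq_add_of_le (Fin.le_def.mp hab)
  induction d generalizing b with
  | zero => exact ⟨0, by rw [Fin.ext (a := b) (b := a) (by simpa using hd)]; simp⟩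
  | succ d ih =>
    let p : Fin n := ⟨a + d, by omega⟩
    obtain ⟨e, he⟩ := ih (b := p) (Fin.le_def.mpr (Nat.le_add_right _ _)) rfl
    obtain ⟨M, hM, -⟩ := hc.2 p b (show (a : ℕ) + d + 1 = b by omega)
    exact ⟨e + M, by push_cast; linear_combination he + hM⟩

lemma exists_shiftedWeight_add_eq {c : Fin n → ℕ} {j : ℕ} (hc : c ∈ Iset n μ j) {a b : Fin n}
    (hab : a ≤ b) : ∃ e : ℕ, shiftedWeight μ a + (a : ℕ) = shiftedWeight μ b + (b : ℕ) + e := by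
  obtain ⟨e, he⟩ := exists_sub_eq_natCast hc hab
  exact ⟨e, by unfold shiftedWeight; linear_combination he⟩

lemma exists_shiftedWeight_eq_succ_of_lt {l : Fin n → ℕ} {j : ℕ} (hl : l ∈ Iset n μ j)
    {i t : Fin n} (hti : t < i) (hAi : shiftedWeight μ i + l i = 0) :
    ∃ e : ℕ, shiftedWeight μ t = e + 1 := by
  let p : Fin n := ⟨i - 1, by omega⟩
  have hpi : (p : ℕ) + 1 = i := show (i : ℕ) - 1 + 1 = i by omega
  have htp : (t : ℕ) ≤ p := show (t : ℕ) ≤ i - 1 by omega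
  obtain ⟨M, hM, hlM⟩ := hl.2 p i hpi
  obtain ⟨e, he⟩ := exists_shiftedWeight_add_eq hl (Fin.le_def.mpr htp)
  refine ⟨M - l i + (p - t) + e, ?_⟩
  have hpi' : ((p : ℕ) : ℂ) + 1 = (i : ℕ) := by exact_mod_cast hpi
  push_cast [Nat.cast_sub hlM, Nat.cast_sub htp]
  simp only [shiftedWeight] at he hAi ⊢
  linear_combination he + hM + hAi - hpi'

variable {k : ℕ} (hbelow : ∀ j : ℕ, j ≤ k → ∀ c ∈ Iset n μ j, qc n μ c ≠ 0)
include hbelow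

lemma shiftedWeight_eq_of_minimal {t : Fin n} (ht : Pi.single t (k + 1) ∈ Iset n μ (k + 1))
    (hqt : qc n μ (Pi.single t (k + 1)) = 0) : shiftedWeight μ t = -(k + 1) := by
  rw [qc_single] at hqt
  obtain ⟨i, hi, hz⟩ := prod_eq_zero_iff.mp hqt
  obtain hik | rfl : i < k ∨ i = k := by rw [mem_range] at hi; omega
  · have hzero : qc n μ (Pi.single t (i + 1)) = 0 :=
      qc_single_eq_zero (Nat.le_add_left 1 i) (by exact_mod_cast hz)
    have hmem : Pi.single t (i + 1) ∈ Iset n μ (i + 1) :=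
      single_mem_Iset ht (by rw [Pi.single_eq_same]; omega)
    exact (hbelow (i + 1) hik _ hmem hzero).elim
  · linear_combination hz

lemma succ_le_of_shiftedWeight_add_eq_zero {l : Fin n → ℕ} {j : ℕ} (hl : l ∈ Iset n μ j)
    {i : Fin n} (hi : 1 ≤ l i) (hAi : shiftedWeight μ i + l i = 0) : k + 1 ≤ l i := by
  by_contra! h
  exact hbelow (l i) (by omega) _ (single_mem_Iset hl le_rfl) (qc_single_eq_zero hi hAi)

lemma eq_of_shiftedWeight_add_eq_zero {t : Fin n} (hAt : shiftedWeight μ t = -(k + 1))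
    {l : Fin n → ℕ} {j : ℕ} (hl : l ∈ Iset n μ j) {i : Fin n} (hi : 1 ≤ l i)
    (hAi : shiftedWeight μ i + l i = 0) : i = t ∧ l i = k + 1 := by
  have hkl := succ_le_of_shiftedWeight_add_eq_zero hbelow hl hi hAi
  have hit : i ≤ t := by
    by_contra! hti
    obtain ⟨e, he⟩ := exists_shiftedWeight_eq_succ_of_lt hl hti hAi
    have : ((k + 1 + e + 1 : ℕ) : ℂ) = 0 := by push_cast; linear_combination hAt - he
    exact absurd (Nat.cast_eq_zero.mp this) (by omega)
  obtain ⟨e, he⟩ := exists_shiftedWeight_add_eq hl hit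
  have : ((k + 1 + i : ℕ) : ℂ) = ((l i + t + e : ℕ) : ℂ) := by
    push_cast; linear_combination hAt - hAi + he
  have := Nat.cast_injective this
  exact ⟨Fin.ext (by omega), by omega⟩

lemma exists_pos_shiftedWeight_add_ne_zero {t : Fin n} (hAt : shiftedWeight μ t = -(k + 1))
    {l : Fin n → ℕ} {j : ℕ} (hl : l ∈ Iset n μ j) (hj : k + 1 < j) :
    ∃ r, 1 ≤ l r ∧ shiftedWeight μ r + l r ≠ 0 := by
  by_contra! h
  have hsupp i (hi : 1 ≤ l i) := eq_of_shiftedWeight_add_eq_zero hbelow hAt hl hi (h i hi)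
  have hsum : ∑ i, l i = l t :=
    Fintype.sum_eq_single t fun i hi => by by_contra h0; exact hi (hsupp i (by omega)).1
  have : l t ≤ k + 1 := by by_cases h0 : 1 ≤ l t <;> [exact (hsupp t h0).2.le; omega]
  have := hl.1
  omega

end

theorem descent_of_exceptional_weights
    (μ : Fin n → ℂ)
    (k : ℕ)
    (hbelow : ∀ j : ℕ, j ≤ k → ∀ c ∈ Iset n μ j, qc n μ c ≠ 0)
    (t : Fin n)
    (hsingle : {c : Fin n → ℕ | c ∈ Iset n μ (k + 1) ∧ qc n μ c = 0}
      = {fun i => if i = t then k + 1 else 0})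
    (s : ℕ) (hs : k + 1 ≤ s)
    (l : Fin n → ℕ) (hl : l ∈ Iset n μ (s + 1)) (hql : qc n μ l = 0) :
    ∃ (m : Fin n → ℕ) (r : Fin n),
      m ∈ Iset n μ s ∧ qc n μ m = 0 ∧
      l = (fun i => m i + if i = r then 1 else 0) ∧
      μ r + (∑ j, μ j) - ((r : ℕ) + 1) + (m r : ℂ) + 1 ≠ 0 := by
  obtain ⟨ht, hqt⟩ := hsingle.ge (show Pi.single t (k + 1) ∈ _ from funext (Pi.single_apply t _))
  have hAt := shiftedWeight_eq_of_minimal hbelow ht hqt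
  obtain ⟨r, hr, hAr⟩ := exists_pos_shiftedWeight_add_ne_zero hbelow hAt hl (by omega)
  obtain ⟨m, rfl⟩ := exists_eq_add_single hr
  have hAr : shiftedWeight μ r + (m r + 1) ≠ 0 := by simpa using hAr
  refine ⟨m, r, mem_Iset_of_add_single hl, ?_, funext fun i => by simp [Pi.single_apply], ?_⟩
  · rw [qc_add_single] at hql
    exact (mul_eq_zero.mp hql).resolve_right hAr
  · simpa only [shiftedWeight, add_assoc] using hAr

end
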